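/- arXiv:1608.00830 — 4 statements merged into one kernel-verified Lean document; each statement's English description precedes it below -/
import Mathlib

section
/- Let g_1,...,g_N be independent standard Gaussian random variables and 1 ≤ ℓ ≤ N. If log(N/ℓ) ≤ q ≤ log N, then ( (1/ℓ) E[ Σ_{k=1}^ℓ (k-th largest of |g_i|)^q ] )^{1/q} is bounded above and below by absolute constant multiples of √q. -/
open MeasureTheory ProbabilityTheory Finset Pointwise

/-- `kmax v k` is the `k`-th largest element (1-indexed) of the values `v 0, …, v (N-1)`. -/
noncomputable def kmax {N : ℕ} (v : Fin N → ℝ) (k : ℕ) : ℝ :=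
  (Multiset.sort (Multiset.ofList (List.ofFn v)) (· ≤ ·)).getD (N - k) 0

/-- Standard inner product on `ℝⁿ`. -/
noncomputable def ip {n : ℕ} (x y : Fin n → ℝ) : ℝ := ∑ j, x j * y j

/-- `hS X ℓ q θ = ((1/ℓ) ∑_{k=1}^ℓ (k-max_i |⟨X i, θ⟩|)^q)^{1/q}`. -/
noncomputable def hS {n N : ℕ} (X : Fin N → (Fin n → ℝ)) (ℓ : ℕ) (q : ℝ)
    (θ : Fin n → ℝ) : ℝ :=
  ((ℓ : ℝ)⁻¹ * ∑ k ∈ Finset.Icc 1 ℓ, kmax (fun i => |ip (X i) θ|) k ^ q) ^ (1/q)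

/-!
Write `A = ∑_{k ≤ ℓ} (k-max |gᵢ|)^q` and `B = ∑ᵢ |gᵢ|^q`. Pointwise `A ≤ B`, and, since the `ℓ`
largest of `N` numbers have at least the overall average (Chebyshev's sum inequality), `ℓ B ≤ N A`.
Taking expectations, `E|g|^q ≤ (1/ℓ) E A ≤ (N/ℓ) E|g|^q ≤ e^q E|g|^q`, and the
factor `e^q` becomes the constant `e` after the `q`-th root. Finally `(E|g|^q)^{1/q} ≍ √q`: from
above by `|x|^q ≤ √q^q e^{√q |x| - q}` and the Gaussian moment generating function, from below
by the Gaussian mass of `[√q, √q + 1]`.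
-/

section OrderStatistics

variable {N : ℕ} (v : Fin N → ℝ)

lemma sort_ofFn_eq_ofFn_comp_sort :
    Multiset.sort (Multiset.ofList (List.ofFn v)) (· ≤ ·) = List.ofFn (v ∘ Tuple.sort v) := by
  refine List.Perm.eq_of_sortedLE (Multiset.pairwise_sort _ _).sortedLE
    (Tuple.monotone_sort v).sortedLE_ofFn ?_
  rw [← Multiset.coe_eq_coe, Multiset.sort_eq, Multiset.coe_eq_coe]
  exact ((Tuple.sort v).ofFn_comp_perm v).symm

lemma kmax_eq_apply_sort {k : ℕ} (hk : 1 ≤ k) (hkN : k ≤ N) :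
    kmax v k = v (Tuple.sort v ⟨N - k, by omega⟩) := by
  rw [kmax, sort_ofFn_eq_ofFn_comp_sort, List.getD_eq_getElem _ _ (by rw [List.length_ofFn]; omega),
    List.getElem_ofFn, Function.comp_apply]

lemma kmax_nonneg (hv : ∀ i, 0 ≤ v i) (k : ℕ) : 0 ≤ kmax v k := by
  rw [kmax, sort_ofFn_eq_ofFn_comp_sort, List.getD_eq_getElem?_getD, List.getElem?_ofFn]
  split <;> simp [hv]

lemma kmax_le_iff {k : ℕ} (hk : 1 ≤ k) (hkN : k ≤ N) (t : ℝ) :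
    kmax v k ≤ t ↔ N - k < #{i | v i ≤ t} := by
  rw [kmax_eq_apply_sort v hk hkN, ← Function.comp_apply (f := v),
    ← Tuple.lt_card_le_iff_apply_le_of_monotone (Tuple.monotone_sort v),
    card_bijective (t := {i | v i ≤ t}) (Tuple.sort v) (Tuple.sort v).bijective (by simp)]

lemma measurable_kmax {k : ℕ} (hk : 1 ≤ k) (hkN : k ≤ N) :
    Measurable fun x : Fin N → ℝ => kmax x k := by
  refine measurable_of_Iic fun t => ?_
  -- `{x | kmax x k ≤ t}` only depends on the pattern `i ↦ decide (x i ≤ t)` in a countable space.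
  have hdec : Measurable fun (x : Fin N → ℝ) (i : Fin N) => decide (x i ≤ t) :=
    measurable_pi_lambda _ fun i => measurable_to_bool <| by
      simpa [Set.preimage] using
        measurableSet_le (measurable_pi_apply (X := fun _ : Fin N => ℝ) i) measurable_const
  have hs : MeasurableSet {b : Fin N → Bool | N - k < #{i | b i}} :=
    (Set.to_countable _).measurableSet
  convert hdec hs using 1
  ext x
  simp [kmax_le_iff x hk hkN]

lemma sum_Icc_kmax_eq {ℓ : ℕ} (hℓN : ℓ ≤ N) (F : ℝ → ℝ) :
    ∑ k ∈ Icc 1 ℓ, F (kmax v k) = ∑ j : Fin N with N - ℓ ≤ j.val, F (v (Tuple.sort v j)) := by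
  refine sum_bij' (fun k hk => (⟨N - k, by rw [mem_Icc] at hk; omega⟩ : Fin N))
    (fun j _ => N - j) ?_ ?_ ?_ ?_ ?_ <;>
    simp only [mem_Icc, mem_filter, mem_univ, true_and, Fin.ext_iff]
  · intro k hk; omega
  · intro j hj; omega
  · intro k hk; omega
  · intro j hj; omega
  · intro k hk; rw [kmax_eq_apply_sort v hk.1 (hk.2.trans hℓN)]

lemma card_filter_sub_le_val {ℓ : ℕ} (hℓN : ℓ ≤ N) : #{j : Fin N | N - ℓ ≤ j.val} = ℓ := by
  have := card_filter_add_card_filter_not (s := univ) fun j : Fin N => j.val < N - ℓ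
  simp only [not_lt, Fin.card_filter_val_lt, card_univ, Fintype.card_fin] at this
  omega

lemma sum_Icc_kmax_le_sum {ℓ : ℕ} (hℓN : ℓ ≤ N) {F : ℝ → ℝ} (hF : ∀ i, 0 ≤ F (v i)) :
    ∑ k ∈ Icc 1 ℓ, F (kmax v k) ≤ ∑ i, F (v i) := by
  rw [sum_Icc_kmax_eq v hℓN, ← Equiv.sum_comp (Tuple.sort v)]
  exact sum_le_sum_of_subset_of_nonneg (filter_subset _ _) fun j _ _ => hF _

lemma card_mul_sum_le_mul_sum_Icc_kmax {ℓ : ℕ} (hℓN : ℓ ≤ N) {F : ℝ → ℝ}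
    (hF : MonotoneOn F (Set.range v)) :
    ℓ * ∑ i, F (v i) ≤ N * ∑ k ∈ Icc 1 ℓ, F (kmax v k) := by
  set f : Fin N → ℝ := fun j => F (v (Tuple.sort v j))
  set top : Fin N → ℝ := fun j => if N - ℓ ≤ j.val then 1 else 0
  have hf : Monovary f top := by
    intro i j hij
    simp only [top] at hij
    split_ifs at hij with hi hj <;> norm_num at hij
    exact hF (Set.mem_range_self _) (Set.mem_range_self _)
      (Tuple.monotone_sort v (Fin.le_def.mpr (by omega)))
  have hchebyshev := hf.sum_mul_sum_le_card_mul_sum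
  have htop : ∑ j, top j = ℓ := by
    rw [sum_boole, card_filter_sub_le_val hℓN]
  have hftop : ∑ j, f j * top j = ∑ j : Fin N with N - ℓ ≤ j.val, f j := by
    simp only [top, mul_ite, mul_one, mul_zero, sum_ite, sum_const_zero, add_zero]
  have hf_sum : ∑ j, f j = ∑ i, F (v i) := Equiv.sum_comp (Tuple.sort v) (F ∘ v)
  rw [htop, hftop, hf_sum, Fintype.card_fin] at hchebyshev
  rw [sum_Icc_kmax_eq v hℓN]
  linarith

lemma sum_Icc_kmax_abs_rpow_nonneg (ℓ : ℕ) (q : ℝ) :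
    0 ≤ ∑ k ∈ Icc 1 ℓ, kmax (fun i => |v i|) k ^ q :=
  sum_nonneg fun k _ => Real.rpow_nonneg (kmax_nonneg _ (fun _ => abs_nonneg _) k) q

lemma sum_Icc_kmax_abs_rpow_le_sum {ℓ : ℕ} (hℓN : ℓ ≤ N) (q : ℝ) :
    ∑ k ∈ Icc 1 ℓ, kmax (fun i => |v i|) k ^ q ≤ ∑ i, |v i| ^ q :=
  sum_Icc_kmax_le_sum _ hℓN (F := (· ^ q)) fun _ => Real.rpow_nonneg (abs_nonneg _) q

end OrderStatistics

section GaussianMoments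

open Real

lemma abs_rpow_le_rpow_mul_exp {q t : ℝ} (hq : 0 < q) (ht : 0 < t) (x : ℝ) :
    |x| ^ q ≤ (q / t) ^ q * exp (t * |x| - q) := by
  calc |x| ^ q = (q / t * (t * |x| / q)) ^ q := by field_simp
    _ = (q / t) ^ q * (t * |x| / q) ^ q := mul_rpow (by positivity) (by positivity)
    _ ≤ (q / t) ^ q * exp (t * |x| / q - 1) ^ q := by
        gcongr
        linarith [add_one_le_exp (t * |x| / q - 1)]
    _ = (q / t) ^ q * exp (t * |x| - q) := by
        rw [← exp_mul]
        field_simp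

lemma integrable_exp_mul_abs_gaussianReal (t : ℝ) :
    Integrable (fun x => exp (t * |x|)) (gaussianReal 0 1) := by
  refine ((integrable_exp_mul_gaussianReal t).add (integrable_exp_mul_gaussianReal (-t))).mono'
    (by fun_prop) (ae_of_all _ fun x => ?_)
  rw [norm_of_nonneg (exp_nonneg _), Pi.add_apply]
  rcases abs_cases x with ⟨h, -⟩ | ⟨h, -⟩ <;> rw [h] <;> simp only [neg_mul, mul_neg] <;>
    linarith [exp_nonneg (t * x), exp_nonneg (-(t * x))]

lemma integral_exp_mul_abs_gaussianReal_le (t : ℝ) :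
    ∫ x, exp (t * |x|) ∂gaussianReal 0 1 ≤ 2 * exp (t ^ 2 / 2) := by
  have hmgf (s : ℝ) : ∫ x, exp (s * x) ∂gaussianReal 0 1 = exp (s ^ 2 / 2) := by
    simpa [mgf] using congrFun (mgf_id_gaussianReal (μ := 0) (v := 1)) s
  calc ∫ x, exp (t * |x|) ∂gaussianReal 0 1
      ≤ ∫ x, (exp (t * x) + exp (-t * x)) ∂gaussianReal 0 1 := by
        refine integral_mono (integrable_exp_mul_abs_gaussianReal t)
          ((integrable_exp_mul_gaussianReal t).add (integrable_exp_mul_gaussianReal (-t)))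
          fun x => ?_
        rcases abs_cases x with ⟨h, -⟩ | ⟨h, -⟩ <;> rw [h] <;> simp only [neg_mul, mul_neg] <;>
          linarith [exp_nonneg (t * x), exp_nonneg (-(t * x))]
    _ = 2 * exp (t ^ 2 / 2) := by
        rw [integral_add (integrable_exp_mul_gaussianReal t) (integrable_exp_mul_gaussianReal (-t)),
          hmgf, hmgf, neg_sq]
        ring

lemma integrable_abs_rpow_gaussianReal {q : ℝ} (hq : 0 < q) :
    Integrable (fun x => |x| ^ q) (gaussianReal 0 1) := by
  have := (memLp_id_gaussianReal' (μ := 0) (v := 1) _ ENNReal.ofReal_ne_top).integrable_norm_rpow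
    (ENNReal.ofReal_pos.mpr hq).ne' ENNReal.ofReal_ne_top
  simpa [ENNReal.toReal_ofReal hq.le] using this

lemma integral_abs_rpow_gaussianReal_le {q : ℝ} (hq : 1 ≤ q) :
    ∫ x, |x| ^ q ∂gaussianReal 0 1 ≤ (2 * √q) ^ q := by
  have hq0 : 0 < q := by linarith
  have hsq : 0 < √q := sqrt_pos.mpr hq0
  calc ∫ x, |x| ^ q ∂gaussianReal 0 1
      ≤ ∫ x, √q ^ q * exp (-q) * exp (√q * |x|) ∂gaussianReal 0 1 := by
        refine integral_mono (integrable_abs_rpow_gaussianReal hq0)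
          ((integrable_exp_mul_abs_gaussianReal _).const_mul _) fun x => ?_
        have := abs_rpow_le_rpow_mul_exp hq0 hsq x
        rwa [div_sqrt, sub_eq_add_neg, exp_add, mul_comm (exp _), ← mul_assoc] at this
    _ ≤ √q ^ q * exp (-q) * (2 * exp (q / 2)) := by
        rw [integral_const_mul]
        gcongr
        simpa [sq_sqrt hq0.le] using integral_exp_mul_abs_gaussianReal_le √q
    _ ≤ 2 ^ q * √q ^ q := by
        have hexp : exp (-q) * exp (q / 2) ≤ 1 := by
          rw [← exp_add]; exact exp_le_one_iff.mpr (by linarith)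
        have htwo : (2 : ℝ) ≤ 2 ^ q := by
          simpa using rpow_le_rpow_of_exponent_le one_le_two hq
        nlinarith [rpow_nonneg hsq.le q]
    _ = (2 * √q) ^ q := (mul_rpow zero_le_two hsq.le).symm

lemma rpow_le_integral_abs_rpow_gaussianReal {q : ℝ} (hq : 1 ≤ q) :
    (exp (-2) * (√(2 * π))⁻¹ * √q) ^ q ≤ ∫ x, |x| ^ q ∂gaussianReal 0 1 := by
  have hq0 : 0 < q := by linarith
  have hsq : 1 ≤ √q := one_le_sqrt.mpr hq
  set S := Set.Icc √q (√q + 1)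
  have hS : MeasurableSet S := measurableSet_Icc
  have hpdf : ∀ x ∈ S, (√(2 * π))⁻¹ * exp (-(2 * q)) ≤ gaussianPDFReal 0 1 x := by
    rintro x ⟨hx₁, hx₂⟩
    have hx_sq : x ^ 2 ≤ 4 * q := by nlinarith [sq_sqrt hq0.le]
    rw [gaussianPDFReal]
    norm_num
    gcongr
    linarith
  have hmass : (√(2 * π))⁻¹ * exp (-(2 * q)) ≤ (gaussianReal 0 1).real S := by
    rw [measureReal_def, gaussianReal_apply_eq_integral _ one_ne_zero,
      ENNReal.toReal_ofReal (setIntegral_nonneg hS fun x _ => gaussianPDFReal_nonneg 0 1 x)]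
    have := setIntegral_ge_of_const_le hS (by simp [S]) hpdf
      (integrable_gaussianPDFReal 0 1).integrableOn
    simpa [S, measureReal_def] using this
  have hS_moment : (gaussianReal 0 1).real S * √q ^ q ≤ ∫ x in S, |x| ^ q ∂gaussianReal 0 1 := by
    refine setIntegral_ge_of_const_le hS (measure_ne_top _ _) (fun x hx => ?_)
      (integrable_abs_rpow_gaussianReal hq0).integrableOn
    exact rpow_le_rpow (by positivity) (hx.1.trans (le_abs_self x)) hq0.le
  have hc : ((√(2 * π))⁻¹) ^ q ≤ (√(2 * π))⁻¹ := by
    refine (rpow_le_rpow_of_exponent_ge (by positivity) ?_ hq).trans_eq (rpow_one _)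
    exact inv_le_one_of_one_le₀ (one_le_sqrt.mpr (by linarith [pi_gt_three]))
  calc (exp (-2) * (√(2 * π))⁻¹ * √q) ^ q
      = ((√(2 * π))⁻¹) ^ q * exp (-(2 * q)) * √q ^ q := by
        rw [mul_rpow (by positivity) (by positivity), mul_rpow (by positivity) (by positivity),
          ← exp_mul]
        ring_nf
    _ ≤ (√(2 * π))⁻¹ * exp (-(2 * q)) * √q ^ q := by gcongr
    _ ≤ (gaussianReal 0 1).real S * √q ^ q := by gcongr
    _ ≤ ∫ x in S, |x| ^ q ∂gaussianReal 0 1 := hS_moment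
    _ ≤ ∫ x, |x| ^ q ∂gaussianReal 0 1 :=
        setIntegral_le_integral (integrable_abs_rpow_gaussianReal hq0)
          (ae_of_all _ fun x => by positivity)

end GaussianMoments

section Expectation

variable {Ω : Type*} [MeasurableSpace Ω] {P : Measure Ω} {N : ℕ} {g : Fin N → Ω → ℝ}
  {μ : Measure ℝ} {q : ℝ}

lemma integrable_abs_rpow_comp (hg : ∀ i, Measurable (g i)) (hmap : ∀ i, P.map (g i) = μ)
    (hint : Integrable (fun x => |x| ^ q) μ) (i : Fin N) :
    Integrable (fun ω => |g i ω| ^ q) P := by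
  rw [← hmap i] at hint
  exact (integrable_map_measure hint.aestronglyMeasurable (hg i).aemeasurable).mp hint

lemma integrable_sum_abs_rpow (hg : ∀ i, Measurable (g i)) (hmap : ∀ i, P.map (g i) = μ)
    (hint : Integrable (fun x => |x| ^ q) μ) :
    Integrable (fun ω => ∑ i, |g i ω| ^ q) P :=
  integrable_finsetSum _ fun i _ => integrable_abs_rpow_comp hg hmap hint i

lemma integral_sum_abs_rpow (hg : ∀ i, Measurable (g i)) (hmap : ∀ i, P.map (g i) = μ)
    (hint : Integrable (fun x => |x| ^ q) μ) :
    ∫ ω, ∑ i, |g i ω| ^ q ∂P = N * ∫ x, |x| ^ q ∂μ := by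
  rw [integral_finsetSum _ fun i _ => integrable_abs_rpow_comp hg hmap hint i]
  have hcomp (i : Fin N) : ∫ ω, |g i ω| ^ q ∂P = ∫ x, |x| ^ q ∂μ := by
    rw [← hmap i, integral_map (hg i).aemeasurable (hmap i ▸ hint).aestronglyMeasurable]
  simp [hcomp]

lemma integral_sum_kmax_le {ℓ : ℕ} (hℓN : ℓ ≤ N) (hg : ∀ i, Measurable (g i))
    (hmap : ∀ i, P.map (g i) = μ) (hint : Integrable (fun x => |x| ^ q) μ) :
    ∫ ω, ∑ k ∈ Icc 1 ℓ, kmax (fun i => |g i ω|) k ^ q ∂P ≤ N * ∫ x, |x| ^ q ∂μ := by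
  rw [← integral_sum_abs_rpow hg hmap hint]
  exact integral_mono_of_nonneg (ae_of_all _ fun ω => sum_Icc_kmax_abs_rpow_nonneg _ ℓ q)
    (integrable_sum_abs_rpow hg hmap hint)
    (ae_of_all _ fun ω => sum_Icc_kmax_abs_rpow_le_sum (fun i => g i ω) hℓN q)

lemma mul_integral_le_integral_sum_kmax {ℓ : ℕ} (hℓ : 1 ≤ ℓ) (hℓN : ℓ ≤ N) (hq : 0 ≤ q)
    (hg : ∀ i, Measurable (g i)) (hmap : ∀ i, P.map (g i) = μ)
    (hint : Integrable (fun x => |x| ^ q) μ) :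
    ℓ * ∫ x, |x| ^ q ∂μ ≤ ∫ ω, ∑ k ∈ Icc 1 ℓ, kmax (fun i => |g i ω|) k ^ q ∂P := by
  have hN : (0 : ℝ) < N := by exact_mod_cast (by omega : 0 < N)
  have hsum := integrable_sum_abs_rpow hg hmap hint
  have htop_meas : Measurable fun ω => ∑ k ∈ Icc 1 ℓ, kmax (fun i => |g i ω|) k ^ q := by
    refine Finset.measurable_sum _ fun k hk => ?_
    rw [mem_Icc] at hk
    exact ((measurable_kmax hk.1 (hk.2.trans hℓN)).comp
      (measurable_pi_lambda _ fun i => (hg i).abs)).pow_const q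
  have htop : Integrable (fun ω => ∑ k ∈ Icc 1 ℓ, kmax (fun i => |g i ω|) k ^ q) P := by
    refine hsum.mono' htop_meas.aestronglyMeasurable (ae_of_all _ fun ω => ?_)
    rw [Real.norm_of_nonneg (sum_Icc_kmax_abs_rpow_nonneg _ ℓ q)]
    exact sum_Icc_kmax_abs_rpow_le_sum (fun i => g i ω) hℓN q
  have hmono (ω : Ω) : MonotoneOn (· ^ q) (Set.range fun i => |g i ω|) :=
    (Real.monotoneOn_rpow_Ici_of_exponent_nonneg hq).mono <| by
      rintro _ ⟨i, rfl⟩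
      exact abs_nonneg (g i ω)
  have h := integral_mono (hsum.const_mul ℓ) (htop.const_mul N) fun ω =>
    card_mul_sum_le_mul_sum_Icc_kmax _ hℓN (hmono ω)
  rw [integral_const_mul, integral_const_mul, integral_sum_abs_rpow hg hmap hint,
    mul_left_comm] at h
  exact le_of_mul_le_mul_left h hN

end Expectation

open Real in
/-- for i.i.d. standard Gaussians g₁,…,g_N, 1 ≤ ℓ ≤ N and
log(N/ℓ) ≤ q ≤ log N, the quantity `((1/ℓ) E ∑_{k=1}^ℓ (k-max |g_i|)^q)^{1/q}`
is bounded above and below by absolute constant multiples of √q. -/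
theorem stmt7 :
    ∃ c C : ℝ, 0 < c ∧ 0 < C ∧
      ∀ (N ℓ : ℕ) (q : ℝ), 1 ≤ ℓ → ℓ ≤ N → 1 ≤ q →
        Real.log ((N : ℝ) / ℓ) ≤ q → q ≤ Real.log N →
        ∀ (Ω : Type) (_ : MeasurableSpace Ω) (P : Measure Ω), IsProbabilityMeasure P →
          ∀ g : Fin N → Ω → ℝ, (∀ i, Measurable (g i)) →
            iIndepFun g P →
            (∀ i, Measure.map (g i) P = gaussianReal 0 1) →
            c * Real.sqrt q ≤
                ((ℓ : ℝ)⁻¹ *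
                    ∫ ω, ∑ k ∈ Finset.Icc 1 ℓ, kmax (fun i => |g i ω|) k ^ q ∂P) ^ (1/q) ∧
              ((ℓ : ℝ)⁻¹ *
                  ∫ ω, ∑ k ∈ Finset.Icc 1 ℓ, kmax (fun i => |g i ω|) k ^ q ∂P) ^ (1/q) ≤
                C * Real.sqrt q := by
  refine ⟨exp (-2) * (√(2 * π))⁻¹, exp 1 * 2, by positivity, by positivity, ?_⟩
  intro N ℓ q hℓ hℓN hq hlog _ Ω _ P _ g hg _ hmap
  have hq0 : 0 < q := by linarith
  have hℓ0 : (0 : ℝ) < ℓ := by exact_mod_cast hℓ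
  have hint := integrable_abs_rpow_gaussianReal hq0
  set M := ∫ x, |x| ^ q ∂gaussianReal 0 1
  set X := (ℓ : ℝ)⁻¹ * ∫ ω, ∑ k ∈ Icc 1 ℓ, kmax (fun i => |g i ω|) k ^ q ∂P
  have hM : 0 ≤ M := integral_nonneg fun x => by positivity
  have hM_le_X : M ≤ X := by
    rw [le_inv_mul_iff₀ hℓ0]
    exact mul_integral_le_integral_sum_kmax hℓ hℓN hq0.le hg hmap hint
  have hX_le : X ≤ exp q * M := by
    have hNℓ : (N : ℝ) / ℓ ≤ exp q :=
      (log_le_iff_le_exp (div_pos (by exact_mod_cast hℓ.trans hℓN) hℓ0)).mp hlog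
    calc X ≤ (ℓ : ℝ)⁻¹ * (N * M) :=
          mul_le_mul_of_nonneg_left (integral_sum_kmax_le hℓN hg hmap hint) (by positivity)
      _ = N / ℓ * M := by ring
      _ ≤ exp q * M := by gcongr
  rw [one_div]
  constructor
  · rw [le_rpow_inv_iff_of_pos (by positivity) (hM.trans hM_le_X) hq0]
    exact (rpow_le_integral_abs_rpow_gaussianReal hq).trans hM_le_X
  · rw [rpow_inv_le_iff_of_pos (hM.trans hM_le_X) (by positivity) hq0, mul_assoc,
      mul_rpow (exp_pos 1).le (by positivity), exp_one_rpow]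
    exact hX_le.trans
      (mul_le_mul_of_nonneg_left (integral_abs_rpow_gaussianReal_le hq) (exp_pos q).le)
end

section
/- Let g_1,...,g_n be independent random variables with density f(t) = e^{-|t|^p}/(2Γ(1+1/p)) on R, 1 ≤ p < ∞, G = (g_1,...,g_n), and Y = G/||G||_p. Then Y is independent of ||G||_p and Y is distributed according to the cone probability measure on the ℓ_p^n-sphere. -/
/-!
The joint density of `G` is `c⁻ⁿ exp (-‖x‖_p ^ p)`, a function of the `ℓ_p` norm alone. For any
radial density with respect to a Haar measure `μ` on a finite-dimensional normed space, polar
coordinates `x ↦ (x / ‖x‖, ‖x‖)` carry the law to a product measure whose first factor is the cone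
measure `μ.toSphere`. The product form gives the independence, and normalising the first factor
identifies the law of `x / ‖x‖` as `B ↦ μ ([0,1] • (S ∩ B)) / μ (closedBall 0 1)`, where `S` is
the unit sphere: the cone measure.
-/

open MeasureTheory ProbabilityTheory Finset Pointwise

open scoped ENNReal

namespace MeasureTheory

variable {α : Type*} [MeasurableSpace α]

theorem lintegral_fin_nat_prod_eq_prod {n : ℕ} (μ : Fin n → Measure α) [∀ i, SigmaFinite (μ i)]
    {f : Fin n → α → ℝ≥0∞} (hf : ∀ i, Measurable (f i)) :
    ∫⁻ x, ∏ i, f i (x i) ∂Measure.pi μ = ∏ i, ∫⁻ t, f i t ∂μ i := by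
  induction n with
  | zero => simp
  | succ n ih =>
    calc
      _ = ∫⁻ x : α × (Fin n → α), f 0 x.1 * ∏ i : Fin n, f i.succ (x.2 i)
            ∂(μ 0).prod (Measure.pi fun i ↦ μ i.succ) := by
        rw [← ((measurePreserving_piFinSuccAbove μ 0).symm).lintegral_comp_emb
          (MeasurableEquiv.measurableEmbedding _)]
        simp_rw [MeasurableEquiv.piFinSuccAbove_symm_apply, Fin.insertNthEquiv,
          Fin.prod_univ_succ, Fin.insertNth_zero, Equiv.coe_fn_mk, Fin.cons_succ,
          Fin.zero_succAbove, cast_eq, Fin.cons_zero]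
      _ = (∫⁻ t, f 0 t ∂μ 0) * ∏ i : Fin n, ∫⁻ t, f i.succ t ∂μ i.succ := by
        rw [lintegral_prod_mul (g := fun x : Fin n → α ↦ ∏ i, f i.succ (x i))
          (hf 0).aemeasurable
          (Finset.measurable_prod _ fun i _ ↦
            (hf i.succ).comp (measurable_pi_apply i)).aemeasurable,
          ih _ fun i ↦ hf i.succ]
      _ = _ := (Fin.prod_univ_succ fun i ↦ ∫⁻ t, f i t ∂μ i).symm

theorem Measure.pi_withDensity {n : ℕ} (μ : Fin n → Measure α) [∀ i, SigmaFinite (μ i)]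
    {f : Fin n → α → ℝ≥0∞} (hf : ∀ i, Measurable (f i))
    [∀ i, SigmaFinite ((μ i).withDensity (f i))] :
    Measure.pi (fun i ↦ (μ i).withDensity (f i)) =
      (Measure.pi μ).withDensity fun x ↦ ∏ i, f i (x i) := by
  refine Measure.pi_eq fun s hs ↦ ?_
  rw [withDensity_apply _ (.univ_pi hs), Measure.restrict_pi_pi,
    lintegral_fin_nat_prod_eq_prod _ hf]
  exact Finset.prod_congr rfl fun i _ ↦ (withDensity_apply _ (hs i)).symm

end MeasureTheory

namespace MeasureTheory.Measure

open Metric Set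

variable {E : Type*} [NormedAddCommGroup E] [NormedSpace ℝ E] [MeasurableSpace E] [BorelSpace E]
  [FiniteDimensional ℝ E] (μ : Measure E) [μ.IsAddHaarMeasure]

theorem withDensity_radial_apply_polar [Nontrivial E] {ρ : ℝ → ℝ≥0∞} (hρ : Measurable ρ)
    {B : Set E} (hB : MeasurableSet B) {A : Set ℝ} (hA : MeasurableSet A) :
    μ.withDensity (fun x ↦ ρ ‖x‖) {x | ‖x‖⁻¹ • x ∈ B ∧ ‖x‖ ∈ A} =
      μ.toSphere (Subtype.val ⁻¹' B) *
        ∫⁻ r in Subtype.val ⁻¹' A, ρ r ∂volumeIoiPow (Module.finrank ℝ E - 1) := by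
  set T := homeomorphUnitSphereProd E ⁻¹' ((Subtype.val ⁻¹' B) ×ˢ (Subtype.val ⁻¹' A))
  have hT : MeasurableSet T := (homeomorphUnitSphereProd E).measurable
    ((measurable_subtype_coe hB).prod (measurable_subtype_coe hA))
  have hcompl : MeasurableSet ({0}ᶜ : Set E) := (measurableSet_singleton 0).compl
  have hpolar : {x | ‖x‖⁻¹ • x ∈ B ∧ ‖x‖ ∈ A} \ {0} = Subtype.val '' T := by
    ext x
    simp [T, and_assoc, and_comm]
  calc
    _ = μ.withDensity (fun x ↦ ρ ‖x‖) (Subtype.val '' T) := by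
      rw [← hpolar, measure_sdiff_null
        (withDensity_absolutelyContinuous _ _ (measure_singleton 0))]
    _ = ∫⁻ z in (Subtype.val ⁻¹' B) ×ˢ (Subtype.val ⁻¹' A), ρ z.2
          ∂μ.toSphere.prod (volumeIoiPow (Module.finrank ℝ E - 1)) := by
      rw [withDensity_apply _
          ((MeasurableEmbedding.subtype_coe hcompl).measurableSet_image.2 hT),
        ← setLIntegral_subtype hcompl, ← μ.measurePreserving_homeomorphUnitSphereProd
          |>.setLIntegral_comp_preimage_emb (Homeomorph.measurableEmbedding _)]
      simp only [homeomorphUnitSphereProd_apply_snd_coe]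
      rfl
    _ = _ := by
      rw [← Measure.prod_restrict,
        lintegral_prod (fun z : sphere (0 : E) 1 × Ioi (0 : ℝ) ↦ ρ z.2) (by fun_prop)]
      dsimp only
      rw [setLIntegral_const, mul_comm]

theorem addHaar_Icc_smul_of_subset_sphere [Nontrivial E] {s : Set E} (hs : s ⊆ sphere 0 1) :
    μ (Icc (0 : ℝ) 1 • s) = μ (Ioo (0 : ℝ) 1 • s) := by
  refine le_antisymm ?_ (measure_mono (smul_subset_smul_right Ioo_subset_Icc_self))
  have hcover : Icc (0 : ℝ) 1 • s ⊆ ({0} ∪ s) ∪ Ioo (0 : ℝ) 1 • s := by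
    rintro _ ⟨r, hr, x, hx, rfl⟩
    rcases hr.1.eq_or_lt with rfl | h0
    · simp
    rcases hr.2.eq_or_lt with rfl | h1
    · simp [hx]
    exact Or.inr ⟨r, ⟨h0, h1⟩, x, hx, rfl⟩
  calc μ (Icc (0 : ℝ) 1 • s) ≤ μ ({0} ∪ s) + μ (Ioo (0 : ℝ) 1 • s) :=
        (measure_mono hcover).trans (measure_union_le _ _)
    _ = μ (Ioo (0 : ℝ) 1 • s) := by
      rw [measure_union_null (measure_singleton 0)
        (measure_mono_null hs (μ.addHaar_sphere 0 1)), zero_add]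

theorem toSphere_preimage_coe [Nontrivial E] {B : Set E} (hB : MeasurableSet B) :
    μ.toSphere (Subtype.val ⁻¹' B) =
      Module.finrank ℝ E * μ (Icc (0 : ℝ) 1 • (sphere 0 1 ∩ B)) := by
  rw [toSphere_apply' _ (measurable_subtype_coe hB), Subtype.image_preimage_coe,
    μ.addHaar_Icc_smul_of_subset_sphere inter_subset_left]

end MeasureTheory.Measure

namespace ProbabilityTheory

open Set

variable {Ω β γ : Type*} [MeasurableSpace Ω] [MeasurableSpace β] [MeasurableSpace γ]
  {P : Measure Ω} [IsProbabilityMeasure P] {f : Ω → β} {g : Ω → γ}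
  {σ : Set β → ℝ≥0∞} {τ : Set γ → ℝ≥0∞}

theorem indepFun_of_measure_inter_preimage_factorizes
    (h : ∀ B A, MeasurableSet B → MeasurableSet A → P (f ⁻¹' B ∩ g ⁻¹' A) = σ B * τ A) :
    IndepFun f g P := by
  have hone : σ univ * τ univ = 1 := by simpa using (h _ _ .univ .univ).symm
  rw [indepFun_iff_measure_inter_preimage_eq_mul]
  intro B A hB hA
  have hf := h B univ hB .univ
  have hg := h univ A .univ hA
  simp only [preimage_univ, inter_univ, univ_inter] at hf hg
  rw [h B A hB hA, hf, hg]
  calc σ B * τ A = σ B * τ A * (σ univ * τ univ) := by rw [hone, mul_one]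
    _ = σ B * τ univ * (σ univ * τ A) := by ring

theorem measure_preimage_eq_div_of_measure_inter_preimage_factorizes
    (h : ∀ B A, MeasurableSet B → MeasurableSet A → P (f ⁻¹' B ∩ g ⁻¹' A) = σ B * τ A)
    {B : Set β} (hB : MeasurableSet B) :
    P (f ⁻¹' B) = σ B / σ univ := by
  have hone : τ univ * σ univ = 1 := by simpa [mul_comm] using (h _ _ .univ .univ).symm
  simpa [div_eq_mul_inv, ENNReal.eq_inv_of_mul_eq_one_left hone] using h B univ hB .univ


section RadialLaw

open Metric Set

variable {E : Type*} [NormedAddCommGroup E] [NormedSpace ℝ E] [MeasurableSpace E] [BorelSpace E]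
  [FiniteDimensional ℝ E] [Nontrivial E] (μ : Measure E) [μ.IsAddHaarMeasure]
  {Ω : Type*} [MeasurableSpace Ω] {P : Measure Ω} {X : Ω → E}
  {ρ : ℝ → ℝ≥0∞}

theorem measure_normalize_mem_norm_mem_of_map_eq_withDensity_radial (hX : Measurable X)
    (hρ : Measurable ρ) (hlaw : P.map X = μ.withDensity fun x ↦ ρ ‖x‖)
    {B : Set E} (hB : MeasurableSet B) {A : Set ℝ} (hA : MeasurableSet A) :
    P ((fun ω ↦ ‖X ω‖⁻¹ • X ω) ⁻¹' B ∩ (fun ω ↦ ‖X ω‖) ⁻¹' A) =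
      μ.toSphere (Subtype.val ⁻¹' B) *
        ∫⁻ r in Subtype.val ⁻¹' A, ρ r ∂Measure.volumeIoiPow (Module.finrank ℝ E - 1) := by
  have hpolar : MeasurableSet {x : E | ‖x‖⁻¹ • x ∈ B ∧ ‖x‖ ∈ A} :=
    ((measurable_norm.inv.smul measurable_id) hB).inter (measurable_norm hA)
  rw [← μ.withDensity_radial_apply_polar hρ hB hA, ← hlaw, Measure.map_apply hX hpolar]
  rfl

theorem indepFun_normalize_norm_of_map_eq_withDensity_radial [IsProbabilityMeasure P]
    (hX : Measurable X) (hρ : Measurable ρ) (hlaw : P.map X = μ.withDensity fun x ↦ ρ ‖x‖) :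
    IndepFun (fun ω ↦ ‖X ω‖⁻¹ • X ω) (fun ω ↦ ‖X ω‖) P :=
  indepFun_of_measure_inter_preimage_factorizes fun _ _ hB hA ↦
    measure_normalize_mem_norm_mem_of_map_eq_withDensity_radial μ hX hρ hlaw hB hA

theorem map_normalize_apply_of_map_eq_withDensity_radial [IsProbabilityMeasure P]
    (hX : Measurable X) (hρ : Measurable ρ) (hlaw : P.map X = μ.withDensity fun x ↦ ρ ‖x‖)
    {B : Set E} (hB : MeasurableSet B) :
    P.map (fun ω ↦ ‖X ω‖⁻¹ • X ω) B =
      μ (Icc (0 : ℝ) 1 • (sphere 0 1 ∩ B)) / μ (closedBall 0 1) := by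
  have hdim : (Module.finrank ℝ E : ℝ≥0∞) ≠ 0 := by simp [Module.finrank_pos.ne']
  rw [Measure.map_apply (by fun_prop) hB,
    measure_preimage_eq_div_of_measure_inter_preimage_factorizes (fun _ _ hB hA ↦
      measure_normalize_mem_norm_mem_of_map_eq_withDensity_radial μ hX hρ hlaw hB hA) hB,
    preimage_univ, Measure.toSphere_apply_univ, μ.toSphere_preimage_coe hB,
    Measure.addHaar_unitClosedBall_eq_addHaar_unitBall,
    ENNReal.mul_div_mul_left _ _ hdim (ENNReal.natCast_ne_top _)]

end RadialLaw

end ProbabilityTheory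

namespace PiLp

open Metric Set

variable (p : ℝ≥0∞) (ι : Type*) [Fintype ι]

noncomputable def lebesgue : Measure (PiLp p fun _ : ι ↦ ℝ) :=
  (volume : Measure (ι → ℝ)).map (WithLp.toLp p)

instance [Fact (1 ≤ p)] : (lebesgue p ι).IsAddHaarMeasure :=
  (PiLp.continuousLinearEquiv p ℝ fun _ : ι ↦ ℝ).symm.isAddHaarMeasure_map volume

variable {p ι}

theorem lebesgue_apply (s : Set (PiLp p fun _ : ι ↦ ℝ)) :
    lebesgue p ι s = volume (WithLp.toLp p ⁻¹' s) :=
  (MeasurableEquiv.toLp p (ι → ℝ)).map_apply s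

theorem lebesgue_Icc_smul_sphere_inter [Fact (1 ≤ p)] (B : Set (ι → ℝ)) :
    lebesgue p ι (Icc (0 : ℝ) 1 • (sphere 0 1 ∩ WithLp.ofLp ⁻¹' B)) =
      volume {y | ∃ x ∈ B, ‖WithLp.toLp p x‖ = 1 ∧ ∃ r : ℝ, 0 ≤ r ∧ r ≤ 1 ∧ y = r • x} := by
  rw [lebesgue_apply]
  congr 1
  ext y
  constructor
  · rintro ⟨r, ⟨hr0, hr1⟩, x, ⟨hx1, hxB⟩, hy⟩
    exact ⟨x.ofLp, hxB, by simpa using hx1, r, hr0, hr1,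
      by simpa using congrArg WithLp.ofLp hy.symm⟩
  · rintro ⟨x, hxB, hx1, r, hr0, hr1, rfl⟩
    exact ⟨r, ⟨hr0, hr1⟩, WithLp.toLp p x, ⟨by simpa using hx1, hxB⟩, rfl⟩

theorem lebesgue_closedBall [Fact (1 ≤ p)] (r : ℝ) :
    lebesgue p ι (closedBall 0 r) = volume {x : ι → ℝ | ‖WithLp.toLp p x‖ ≤ r} := by
  rw [lebesgue_apply]
  congr 1
  ext x
  simp

theorem norm_toLp_ofReal {q : ℝ} [Fact (1 ≤ ENNReal.ofReal q)] (x : ι → ℝ) :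
    ‖WithLp.toLp (ENNReal.ofReal q) x‖ = (∑ i, |x i| ^ q) ^ (1 / q) := by
  have hq : 0 < q := zero_lt_one.trans_le (ENNReal.one_le_ofReal.1 Fact.out)
  simpa [ENNReal.toReal_ofReal hq.le] using
    PiLp.norm_eq_sum (p := ENNReal.ofReal q) (by rwa [ENNReal.toReal_ofReal hq.le])
      (WithLp.toLp _ x)

theorem map_toLp_withDensity {p : ℝ≥0∞} {ι : Type*} [Fintype ι] [Fact (1 ≤ p)]
    {ρ : ℝ → ℝ≥0∞} (hρ : Measurable ρ) :
    ((volume : Measure (ι → ℝ)).withDensity fun x ↦ ρ ‖WithLp.toLp p x‖).map (WithLp.toLp p) =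
      (lebesgue p ι).withDensity fun x ↦ ρ ‖x‖ := by
  ext s hs
  rw [Measure.map_apply (WithLp.measurable_toLp _ _) hs,
    withDensity_apply _ (WithLp.measurable_toLp _ _ hs), withDensity_apply _ hs, lebesgue]
  exact (setLIntegral_map hs (hρ.comp measurable_norm) (WithLp.measurable_toLp _ _)).symm

theorem prod_ofReal_exp_neg_abs_rpow_div {q : ℝ} [Fact (1 ≤ ENNReal.ofReal q)] {n : ℕ}
    {c : ℝ} (hc : 0 ≤ c) (x : Fin n → ℝ) :
    ∏ j, ENNReal.ofReal (Real.exp (-|x j| ^ q) / c) =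
      ENNReal.ofReal (Real.exp (-‖WithLp.toLp (ENNReal.ofReal q) x‖ ^ q) / c ^ n) := by
  have hq : 0 < q := zero_lt_one.trans_le (ENNReal.one_le_ofReal.1 Fact.out)
  have hsum : 0 ≤ ∑ j, |x j| ^ q := Finset.sum_nonneg fun j _ ↦ by positivity
  rw [← ENNReal.ofReal_prod_of_nonneg fun j _ ↦ by positivity, norm_toLp_ofReal,
    ← Real.rpow_mul hsum, one_div_mul_cancel hq.ne', Real.rpow_one, Finset.prod_div_distrib,
    ← Real.exp_sum, Finset.sum_neg_distrib, Finset.prod_const, Finset.card_univ, Fintype.card_fin]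

theorem map_toLp_eq_lebesgue_withDensity_of_iIndepFun {Ω : Type*} [MeasurableSpace Ω]
    {P : Measure Ω} [IsProbabilityMeasure P] {n : ℕ} {g : Fin n → Ω → ℝ}
    (hmeas : ∀ j, Measurable (g j)) (hindep : iIndepFun g P)
    {q : ℝ} [Fact (1 ≤ ENNReal.ofReal q)] {c : ℝ} (hc : 0 ≤ c)
    (hdist : ∀ j, P.map (g j) =
      volume.withDensity fun t ↦ ENNReal.ofReal (Real.exp (-|t| ^ q) / c)) :
    P.map (fun ω ↦ WithLp.toLp (ENNReal.ofReal q) fun j ↦ g j ω) =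
      (lebesgue (ENNReal.ofReal q) (Fin n)).withDensity
        fun x ↦ ENNReal.ofReal (Real.exp (-‖x‖ ^ q) / c ^ n) := by
  have hdens : Measurable fun t : ℝ ↦ ENNReal.ofReal (Real.exp (-|t| ^ q) / c) := by fun_prop
  calc
    _ = (P.map fun ω j ↦ g j ω).map (WithLp.toLp (ENNReal.ofReal q)) :=
      (Measure.map_map (WithLp.measurable_toLp _ _) (measurable_pi_iff.2 hmeas)).symm
    _ = ((Measure.pi fun _ ↦ volume).withDensity
          fun x ↦ ∏ j : Fin n, ENNReal.ofReal (Real.exp (-|x j| ^ q) / c)).map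
            (WithLp.toLp (ENNReal.ofReal q)) := by
      rw [(iIndepFun_iff_map_fun_eq_pi_map fun j ↦ (hmeas j).aemeasurable).1 hindep,
        funext hdist, Measure.pi_withDensity _ fun _ ↦ hdens]
    _ = _ := by
      simp_rw [prod_ofReal_exp_neg_abs_rpow_div hc]
      exact map_toLp_withDensity (ρ := fun r ↦ ENNReal.ofReal (Real.exp (-r ^ q) / c ^ n))
        (by fun_prop)

end PiLp

/-- Schechtman–Zinn: if g₁,…,g_n are i.i.d. with density
`t ↦ e^{-|t|^p}/(2Γ(1+1/p))`, G = (g₁,…,g_n) and Y = G/‖G‖_p, then Y is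
independent of ‖G‖_p and Y is distributed according to the cone probability
measure on the ℓ_pⁿ-sphere, i.e. for every Borel set B the probability that
Y ∈ B equals `vol{r·x : x ∈ B ∩ S_pⁿ⁻¹, 0 ≤ r ≤ 1}/vol(B_pⁿ)`. -/
theorem stmt10 {n : ℕ} (hn : 1 ≤ n) (p : ℝ) (hp : 1 ≤ p)
    {Ω : Type} [MeasurableSpace Ω] (P : Measure Ω) [IsProbabilityMeasure P]
    (g : Fin n → Ω → ℝ) (hmeas : ∀ j, Measurable (g j))
    (hindep : iIndepFun g P)
    (hdist : ∀ j, Measure.map (g j) P =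
      volume.withDensity (fun t =>
        ENNReal.ofReal (Real.exp (-|t| ^ p) / (2 * Real.Gamma (1 + 1/p))))) :
    IndepFun (fun ω => ((∑ j, |g j ω| ^ p) ^ (1/p))⁻¹ • fun j => g j ω)
        (fun ω => (∑ j, |g j ω| ^ p) ^ (1/p)) P ∧
      ∀ B : Set (Fin n → ℝ), MeasurableSet B →
        Measure.map (fun ω => ((∑ j, |g j ω| ^ p) ^ (1/p))⁻¹ • fun j => g j ω) P B =
          volume {y : Fin n → ℝ | ∃ x ∈ B, (∑ j, |x j| ^ p) ^ (1/p) = 1 ∧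
              ∃ r : ℝ, 0 ≤ r ∧ r ≤ 1 ∧ y = r • x} /
            volume {x : Fin n → ℝ | (∑ j, |x j| ^ p) ^ (1/p) ≤ 1} := by
  have : Fact (1 ≤ ENNReal.ofReal p) := ⟨ENNReal.one_le_ofReal.2 hp⟩
  have : Nonempty (Fin n) := ⟨⟨0, hn⟩⟩
  set X : Ω → PiLp (ENNReal.ofReal p) fun _ : Fin n ↦ ℝ :=
    fun ω ↦ WithLp.toLp _ fun j ↦ g j ω
  have hX : Measurable X := (WithLp.measurable_toLp _ _).comp (measurable_pi_iff.2 hmeas)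
  have hnorm : (fun ω ↦ ‖X ω‖) = fun ω ↦ (∑ j, |g j ω| ^ p) ^ (1 / p) :=
    funext fun ω ↦ PiLp.norm_toLp_ofReal _
  have hY : (fun ω ↦ ((∑ j, |g j ω| ^ p) ^ (1 / p))⁻¹ • fun j ↦ g j ω) =
      WithLp.ofLp ∘ fun ω ↦ ‖X ω‖⁻¹ • X ω := by
    ext ω
    simp [X, PiLp.norm_toLp_ofReal]
  have hlaw := PiLp.map_toLp_eq_lebesgue_withDensity_of_iIndepFun hmeas hindep
    (by positivity : 0 ≤ 2 * Real.Gamma (1 + 1 / p)) hdist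
  have hρ : Measurable fun r : ℝ ↦
      ENNReal.ofReal (Real.exp (-r ^ p) / (2 * Real.Gamma (1 + 1 / p)) ^ n) := by fun_prop
  refine ⟨?_, fun B hB ↦ ?_⟩
  · rw [hY, ← hnorm]
    exact (indepFun_normalize_norm_of_map_eq_withDensity_radial _ hX hρ hlaw).comp
        (WithLp.measurable_ofLp _ _) measurable_id
  · rw [hY, ← Measure.map_map (WithLp.measurable_ofLp _ _) (by fun_prop),
      Measure.map_apply (WithLp.measurable_ofLp _ _) hB,
      map_normalize_apply_of_map_eq_withDensity_radial _ hX hρ hlaw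
        (WithLp.measurable_ofLp _ _ hB),
      PiLp.lebesgue_Icc_smul_sphere_inter, PiLp.lebesgue_closedBall]
    simp only [PiLp.norm_toLp_ofReal]
end

section
/- Let X_1,...,X_N be i.i.d. random vectors in R^n and θ ∈ S^{n-1}. Then for every 1 ≤ ℓ ≤ N, E[(1/ℓ) Σ_{k=1}^ℓ k-max_{1≤i≤N}|⟨X_i,θ⟩|] ≥ c · E[max_{1≤i≤⌊N/ℓ⌋}|⟨X_i,θ⟩|] for an absolute constant c > 0. -/
open MeasureTheory ProbabilityTheory Finset Pointwise

/-! Cut the first `ℓ * ⌊N/ℓ⌋` indices into `ℓ` disjoint blocks of `m = ⌊N/ℓ⌋` indices. By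
independence and identical distribution every block maximum has the law of the maximum of `m`
i.i.d. copies, so the mean of the `ℓ` block maxima has the expectation of the right-hand side.
Pointwise, the block maxima are attained at `ℓ` distinct indices, so their sum is at most the sum
of the `ℓ` largest values. Hence the inequality holds with `c = 1`. -/

namespace List
variable {α : Type*} [LinearOrder α] {l : List α}

theorem SortedLE.length_sub_le_countP_getElem_le (hl : l.SortedLE) (i : ℕ) (hi : i < l.length) :
    l.length - i ≤ l.countP (fun x => l[i] ≤ x) := by
  have hdrop : ∀ x ∈ l.drop i, l[i] ≤ x := by
    intro x hx
    obtain ⟨p, hp, rfl⟩ := getElem_of_mem hx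
    rw [getElem_drop]
    exact sortedLE_iff_getElem_le_getElem_of_le.1 hl (Nat.le_add_right i p)
  refine le_of_eq_of_le ?_ (drop_sublist i l).countP_le
  rw [countP_eq_length.2 (by simpa using hdrop), length_drop]

theorem SortedLE.le_getElem_of_le_countP (hl : l.SortedLE) {t : α} {k : ℕ} (hk : 0 < k)
    (hkl : k ≤ l.length) (h : k ≤ l.countP (fun x => t ≤ x)) :
    t ≤ l[l.length - k] := by
  by_contra! hlt
  -- then the first `l.length - k + 1` entries are all `< t`
  have htake : (l.take (l.length - k + 1)).countP (fun x => t ≤ x) = 0 := by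
    refine countP_eq_zero.2 fun x hx => ?_
    obtain ⟨p, hp, rfl⟩ := getElem_of_mem hx
    rw [getElem_take]
    have hp' : p ≤ l.length - k := by simp only [length_take] at hp; omega
    simpa using (sortedLE_iff_getElem_le_getElem_of_le.1 hl hp').trans_lt hlt
  have hdrop := (l.drop (l.length - k + 1)).countP_le_length (p := fun x => t ≤ x)
  rw [← take_append_drop (l.length - k + 1) l, countP_append, htake] at h
  simp only [length_drop] at hdrop
  omega

end List

theorem le_kmax_of_le_countP {N : ℕ} (v : Fin N → ℝ) {t : ℝ} {k : ℕ} (hk : 0 < k) (hkN : k ≤ N)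
    (h : k ≤ Multiset.countP (t ≤ ·) (List.ofFn v : Multiset ℝ)) : t ≤ kmax v k := by
  have hl := (Multiset.pairwise_sort (List.ofFn v : Multiset ℝ) (· ≤ ·)).sortedLE
  have hlen : (Multiset.sort (List.ofFn v : Multiset ℝ) (· ≤ ·)).length = N := by simp
  rw [← Multiset.sort_eq (List.ofFn v : Multiset ℝ) (· ≤ ·), Multiset.coe_countP] at h
  rw [kmax, List.getD_eq_getElem _ _ (by omega)]
  simpa only [hlen] using hl.le_getElem_of_le_countP hk (by omega) h

theorem sum_le_sum_kmax {N ℓ : ℕ} (v : Fin N → ℝ) {ι : Fin ℓ → Fin N} (hι : ι.Injective) :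
    ∑ j, v (ι j) ≤ ∑ k ∈ Icc 1 ℓ, kmax v k := by
  have hℓN : ℓ ≤ N := by simpa using Fintype.card_le_of_injective ι hι
  have hsub : (List.ofFn (v ∘ ι) : Multiset ℝ) ≤ List.ofFn v := by
    rw [← Fin.univ_val_map, ← Fin.univ_val_map, ← Multiset.map_map]
    exact Multiset.map_le_map (Finset.val_le_iff.2 (Finset.subset_univ (univ.map ⟨ι, hι⟩)))
  obtain ⟨b, hbv, hb⟩ : ∃ b : List ℝ, (b : Multiset ℝ) = List.ofFn (v ∘ ι) ∧ b.SortedLE :=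
    ⟨_, Multiset.sort_eq _ (· ≤ ·), (Multiset.pairwise_sort _ _).sortedLE⟩
  have hblen : b.length = ℓ := by simpa using congrArg Multiset.card hbv
  have hkey : ∀ i : Fin b.length, b[i] ≤ kmax v (ℓ - i) := by
    intro i
    refine le_kmax_of_le_countP v (by omega) (by omega) ?_
    calc ℓ - i ≤ b.countP (b[i] ≤ ·) := by
          rw [← hblen]; exact hb.length_sub_le_countP_getElem_le i i.2
      _ = Multiset.countP (b[i] ≤ ·) (List.ofFn (v ∘ ι) : Multiset ℝ) := by
          rw [← hbv, Multiset.coe_countP]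
      _ ≤ _ := Multiset.countP_le_of_le _ hsub
  calc ∑ j, v (ι j) = (List.ofFn (v ∘ ι)).sum := List.sum_ofFn.symm
    _ = b.sum := by rw [← Multiset.sum_coe, ← hbv, Multiset.sum_coe]
    _ = ∑ i : Fin b.length, b[i] := (Fin.sum_univ_getElem b).symm
    _ ≤ ∑ i : Fin b.length, kmax v (ℓ - i) := sum_le_sum fun i _ => hkey i
    _ = ∑ k ∈ Icc 1 ℓ, kmax v k := by
        rw [Fin.sum_univ_eq_sum_range (fun r => kmax v (ℓ - r)), hblen]
        refine sum_nbij' (ℓ - ·) (ℓ - ·) ?_ ?_ ?_ ?_ fun _ _ => rfl <;>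
          intro a ha <;> simp only [mem_range, mem_Icc] at ha ⊢ <;> omega

theorem sum_iSup_le_sum_kmax {N ℓ : ℕ} {κ : Type*} [Finite κ] [Nonempty κ] (v : Fin N → ℝ)
    {e : Fin ℓ → κ → Fin N} (he : (Function.uncurry e).Injective) :
    ∑ j, ⨆ t, v (e j t) ≤ ∑ k ∈ Icc 1 ℓ, kmax v k := by
  choose t ht using fun j => exists_eq_ciSup_of_finite (f := fun t => v (e j t))
  calc ∑ j, ⨆ t, v (e j t) = ∑ j, v (e j (t j)) := sum_congr rfl fun j _ => (ht j).symm
    _ ≤ ∑ k ∈ Icc 1 ℓ, kmax v k :=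
        sum_le_sum_kmax v fun j j' h => congrArg Prod.fst (he h : (j, t j) = (j', t j'))

theorem iSup_ite_lt_eq_iSup_castLE {N m : ℕ} (hm : 0 < m) (hmN : m ≤ N) {v : Fin N → ℝ}
    (hv : ∀ i, 0 ≤ v i) :
    (⨆ i : Fin N, if (i : ℕ) < m then v i else 0) = ⨆ t : Fin m, v (Fin.castLE hmN t) := by
  have : Nonempty (Fin N) := ⟨⟨0, by omega⟩⟩
  have : Nonempty (Fin m) := ⟨⟨0, hm⟩⟩
  have hbdd := (Set.finite_range fun t : Fin m => v (Fin.castLE hmN t)).bddAbove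
  refine le_antisymm (ciSup_le fun i => ?_) (ciSup_le fun t => ?_)
  · split_ifs with hi
    · exact le_ciSup hbdd ⟨i, hi⟩
    · exact (hv _).trans (le_ciSup hbdd ⟨0, hm⟩)
  · refine le_of_eq_of_le ?_ (le_ciSup (Set.finite_range _).bddAbove (Fin.castLE hmN t))
    simp [t.2]

theorem ProbabilityTheory.iIndepFun.identDistrib_precomp {Ω ι κ β : Type*} [MeasurableSpace Ω]
    [MeasurableSpace β] [Fintype κ] {P : Measure Ω} {Y : ι → Ω → β} (hind : iIndepFun Y P)
    (hid : ∀ i j, IdentDistrib (Y i) (Y j) P P) {f g : κ → ι} (hf : f.Injective)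
    (hg : g.Injective) :
    IdentDistrib (fun ω t => Y (f t) ω) (fun ω t => Y (g t) ω) P P where
  aemeasurable_fst := aemeasurable_pi_lambda _ fun t => (hid (f t) (f t)).aemeasurable_fst
  aemeasurable_snd := aemeasurable_pi_lambda _ fun t => (hid (g t) (g t)).aemeasurable_fst
  map_eq := by
    rw [(hind.precomp hf).map_fun_eq_pi_map fun t => (hid (f t) (f t)).aemeasurable_fst,
      (hind.precomp hg).map_fun_eq_pi_map fun t => (hid (g t) (g t)).aemeasurable_fst]
    exact congrArg Measure.pi (funext fun t => (hid (f t) (g t)).map_eq)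

theorem integral_iSup_le_integral_avg_kmax {Ω : Type*} [MeasurableSpace Ω] {P : Measure Ω}
    {N ℓ m : ℕ} (hℓ : 0 < ℓ) (hm : 0 < m) (h : ℓ * m ≤ N) {Y : Fin N → Ω → ℝ}
    (hind : iIndepFun Y P) (hid : ∀ i j, IdentDistrib (Y i) (Y j) P P) {f : Fin m → Fin N}
    (hf : f.Injective) (hmax : Integrable (fun ω => ⨆ t, Y (f t) ω) P)
    (htop : Integrable (fun ω => (ℓ : ℝ)⁻¹ * ∑ k ∈ Icc 1 ℓ, kmax (fun i => Y i ω) k) P) :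
    ∫ ω, ⨆ t, Y (f t) ω ∂P ≤ ∫ ω, (ℓ : ℝ)⁻¹ * ∑ k ∈ Icc 1 ℓ, kmax (fun i => Y i ω) k ∂P := by
  have : Nonempty (Fin m) := ⟨⟨0, hm⟩⟩
  -- `e j t = m * j + t`: the `j`-th of `ℓ` disjoint blocks of `m` consecutive indices.
  let e : Fin ℓ → Fin m → Fin N := fun j t => Fin.castLE h (finProdFinEquiv (j, t))
  have he : (Function.uncurry e).Injective :=
    (Fin.castLE_injective h).comp finProdFinEquiv.injective
  have hblock : ∀ j, IdentDistrib (fun ω => ⨆ t, Y (e j t) ω) (fun ω => ⨆ t, Y (f t) ω) P P :=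
    fun j => (hind.identDistrib_precomp hid
      (fun t t' h => congrArg Prod.snd (he h : (j, t) = (j, t'))) hf).comp
      (Measurable.iSup measurable_pi_apply)
  have hblockInt : ∀ j, Integrable (fun ω => ⨆ t, Y (e j t) ω) P :=
    fun j => (hblock j).integrable_iff.2 hmax
  calc ∫ ω, ⨆ t, Y (f t) ω ∂P = (ℓ : ℝ)⁻¹ * ∑ j : Fin ℓ, ∫ ω, ⨆ t, Y (e j t) ω ∂P := by
        simp only [fun j => (hblock j).integral_eq, sum_const, card_univ, Fintype.card_fin,
          nsmul_eq_mul]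
        field_simp
    _ = ∫ ω, (ℓ : ℝ)⁻¹ * ∑ j, ⨆ t, Y (e j t) ω ∂P := by
        rw [integral_const_mul, integral_finsetSum _ fun j _ => hblockInt j]
    _ ≤ ∫ ω, (ℓ : ℝ)⁻¹ * ∑ k ∈ Icc 1 ℓ, kmax (fun i => Y i ω) k ∂P :=
        integral_mono ((integrable_finsetSum _ fun j _ => hblockInt j).const_mul _) htop
          fun ω => mul_le_mul_of_nonneg_left (sum_iSup_le_sum_kmax (fun i => Y i ω) he)
            (by positivity)

/-- for i.i.d. random vectors X₁,…,X_N and a unit vector θ,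
`E[(1/ℓ) ∑_{k=1}^ℓ k-max_i |⟨X_i,θ⟩|] ≥ c E[max_{1≤i≤⌊N/ℓ⌋} |⟨X_i,θ⟩|]` for an
absolute constant c > 0 (the maximum over the first ⌊N/ℓ⌋ indices is written
as a supremum over indices i < N/ℓ, padded by 0). -/
theorem stmt15 :
    ∃ c : ℝ, 0 < c ∧
      ∀ (n N ℓ : ℕ), 1 ≤ ℓ → ℓ ≤ N →
        ∀ (Ω : Type) (_ : MeasurableSpace Ω) (P : Measure Ω), IsProbabilityMeasure P →
          ∀ X : Fin N → Ω → (Fin n → ℝ), (∀ i, Measurable (X i)) →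
            iIndepFun X P →
            (∀ i j, Measure.map (X i) P = Measure.map (X j) P) →
            ∀ θ : Fin n → ℝ, (∑ j, θ j ^ 2 = 1) →
            Integrable (fun ω =>
              (ℓ : ℝ)⁻¹ * ∑ k ∈ Finset.Icc 1 ℓ, kmax (fun i => |ip (X i ω) θ|) k) P →
            Integrable (fun ω => ⨆ i : Fin N,
              if (i : ℕ) < N / ℓ then |ip (X i ω) θ| else 0) P →
            c * ∫ ω, (⨆ i : Fin N,
                if (i : ℕ) < N / ℓ then |ip (X i ω) θ| else 0) ∂P ≤
              ∫ ω, (ℓ : ℝ)⁻¹ *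
                ∑ k ∈ Finset.Icc 1 ℓ, kmax (fun i => |ip (X i ω) θ|) k ∂P := by
  refine ⟨1, one_pos, fun n N ℓ hℓ hℓN Ω _ P _ X hX hind hid θ _ htop hmax => ?_⟩
  have hm : 0 < N / ℓ := Nat.div_pos hℓN hℓ
  have hmN : N / ℓ ≤ N := Nat.div_le_self N ℓ
  have hproj : Measurable fun x : Fin n → ℝ => |ip x θ| := by unfold ip; fun_prop
  have hsup : ∀ ω, (⨆ i : Fin N, if (i : ℕ) < N / ℓ then |ip (X i ω) θ| else 0) =
      ⨆ t : Fin (N / ℓ), |ip (X (Fin.castLE hmN t) ω) θ| :=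
    fun ω => iSup_ite_lt_eq_iSup_castLE hm hmN fun i => abs_nonneg _
  simp only [hsup, one_mul] at hmax ⊢
  exact integral_iSup_le_integral_avg_kmax hℓ hm (Nat.mul_div_le N ℓ)
    (hind.comp _ fun _ => hproj)
    (fun i j => (IdentDistrib.mk (hX i).aemeasurable (hX j).aemeasurable (hid i j)).comp hproj)
    (Fin.castLE_injective hmN) hmax htop
end

section
/- Let X_1,...,X_N be i.i.d. random vectors in R^n with distribution μ, q ≥ 1 with e^q ≤ N, and θ ∈ S^{n-1}. Partition {1,...,N} into m = ⌊N/e^q⌋ blocks σ_1,...,σ_m each of size ≥ e^q. Then E[ (N^{-1} Σ_{i=1}^N |⟨X_i,θ⟩|^q)^{1/q} ] ≥ (m/N)^{1/q} · min_{1≤j≤m} E[max_{i ∈ σ_j} |⟨X_i,θ⟩|], and since m ≥ N/(2e^q), the prefactor (m/N)^{1/q} is at least (2)^{-1/q} e^{-1} ≥ 1/(2e). -/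
open MeasureTheory ProbabilityTheory Finset Pointwise

lemma Real.ciInf_le_mean {κ : Type*} [Fintype κ] [Nonempty κ] (f : κ → ℝ) :
    ⨅ j, f j ≤ (Fintype.card κ : ℝ)⁻¹ * ∑ j, f j := by
  have hcard : (0 : ℝ) < Fintype.card κ := by exact_mod_cast Fintype.card_pos
  rw [le_inv_mul_iff₀ hcard]
  simpa using card_nsmul_le_sum univ f _ fun j _ => ciInf_le (Set.finite_range f).bddBelow j

lemma Real.biSup_rpow_le_sum_rpow {ι : Type*} {s : Finset ι} {a : ι → ℝ} (ha : ∀ i, 0 ≤ a i)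
    {q : ℝ} (hq : 0 < q) : (⨆ i ∈ s, a i) ^ q ≤ ∑ i ∈ s, a i ^ q := by
  have hsum : 0 ≤ ∑ i ∈ s, a i ^ q := sum_nonneg fun i _ => Real.rpow_nonneg (ha i) q
  have hsup : ⨆ i ∈ s, a i ≤ (∑ i ∈ s, a i ^ q) ^ q⁻¹ := by
    refine Real.iSup_le (fun i => Real.iSup_le (fun hi => ?_) (by positivity)) (by positivity)
    calc a i = (a i ^ q) ^ q⁻¹ := (Real.rpow_rpow_inv (ha i) hq.ne').symm
      _ ≤ (∑ i ∈ s, a i ^ q) ^ q⁻¹ := by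
        gcongr
        exacts [Real.rpow_nonneg (ha i) q,
          single_le_sum (fun i _ => Real.rpow_nonneg (ha i) q) hi]
  calc (⨆ i ∈ s, a i) ^ q ≤ ((∑ i ∈ s, a i ^ q) ^ q⁻¹) ^ q := by
        gcongr
        exact Real.iSup_nonneg fun i => Real.iSup_nonneg fun _ => ha i
    _ = ∑ i ∈ s, a i ^ q := Real.rpow_inv_rpow hsum hq.ne'

section
open Function

lemma Real.sum_biSup_rpow_le_sum_rpow {ι κ : Type*} [Fintype ι] [DecidableEq ι] [Fintype κ]
    {σ : κ → Finset ι} (hσ : Pairwise (Disjoint on σ)) {a : ι → ℝ} (ha : ∀ i, 0 ≤ a i) {q : ℝ} (hq : 0 < q) :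
    ∑ j, (⨆ i ∈ σ j, a i) ^ q ≤ ∑ i, a i ^ q :=
  calc ∑ j, (⨆ i ∈ σ j, a i) ^ q ≤ ∑ j, ∑ i ∈ σ j, a i ^ q :=
        sum_le_sum fun _ _ => Real.biSup_rpow_le_sum_rpow ha hq
    _ = ∑ i ∈ univ.biUnion σ, a i ^ q := (sum_biUnion fun _ _ _ _ h => hσ h).symm
    _ ≤ ∑ i, a i ^ q :=
        sum_le_sum_of_subset_of_nonneg (subset_univ _) fun i _ _ => Real.rpow_nonneg (ha i) q

lemma Real.mul_mean_biSup_le_rpow_mean {ι κ : Type*} [Fintype ι] [Fintype κ] [Nonempty κ]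
    {σ : κ → Finset ι} (hσ : Pairwise (Disjoint on σ)) {a : ι → ℝ} (ha : ∀ i, 0 ≤ a i)
    {q N : ℝ} (hq : 1 ≤ q) (hN : 0 ≤ N) :
    ((Fintype.card κ : ℝ) / N) ^ (1 / q) * ((Fintype.card κ : ℝ)⁻¹ * ∑ j, ⨆ i ∈ σ j, a i) ≤
      (N⁻¹ * ∑ i, a i ^ q) ^ (1 / q) := by
  classical
  set m : ℝ := (Fintype.card κ : ℝ)
  have hm : 0 < m := Nat.cast_pos.2 Fintype.card_pos
  have hq0 : 0 < q := zero_lt_one.trans_le hq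
  have hT : ∀ j, 0 ≤ ⨆ i ∈ σ j, a i := fun j =>
    Real.iSup_nonneg fun i => Real.iSup_nonneg fun _ => ha i
  have hTq : 0 ≤ ∑ j, (⨆ i ∈ σ j, a i) ^ q := sum_nonneg fun j _ => Real.rpow_nonneg (hT j) q
  have power_mean : m⁻¹ * ∑ j, ⨆ i ∈ σ j, a i ≤ (m⁻¹ * ∑ j, (⨆ i ∈ σ j, a i) ^ q) ^ (1 / q) := by
    simpa only [mul_sum] using Real.arith_mean_le_rpow_mean univ (fun _ => m⁻¹) _
      (fun _ _ => by positivity) (by simp [m]) (fun j _ => hT j) hq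
  calc (m / N) ^ (1 / q) * (m⁻¹ * ∑ j, ⨆ i ∈ σ j, a i)
      ≤ (m / N) ^ (1 / q) * (m⁻¹ * ∑ j, (⨆ i ∈ σ j, a i) ^ q) ^ (1 / q) := by gcongr
    _ = (N⁻¹ * ∑ j, (⨆ i ∈ σ j, a i) ^ q) ^ (1 / q) := by
        rw [← Real.mul_rpow (by positivity) (by positivity)]
        field_simp
    _ ≤ (N⁻¹ * ∑ i, a i ^ q) ^ (1 / q) := by
        have := Real.sum_biSup_rpow_le_sum_rpow hσ ha hq0
        gcongr

end

lemma Nat.half_le_floor {x : ℝ} (hx : 1 ≤ x) : x / 2 ≤ ⌊x⌋₊ := by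
  have hlt := Nat.sub_one_lt_floor x
  have hone : (1 : ℝ) ≤ ⌊x⌋₊ := by exact_mod_cast Nat.one_le_floor_iff x |>.2 hx
  linarith

lemma inv_two_mul_exp_one_le_rpow_floor_div {q N : ℝ} (hq : 1 ≤ q) (hqN : Real.exp q ≤ N) :
    (2 * Real.exp 1)⁻¹ ≤ (⌊N / Real.exp q⌋₊ / N) ^ (1 / q) := by
  have hq0 : 0 < q := zero_lt_one.trans_le hq
  have hN : 0 < N := (Real.exp_pos q).trans_le hqN
  have hm : (2 * Real.exp q)⁻¹ ≤ ⌊N / Real.exp q⌋₊ / N := by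
    rw [le_div_iff₀ hN]
    calc (2 * Real.exp q)⁻¹ * N = N / Real.exp q / 2 := by ring
      _ ≤ ⌊N / Real.exp q⌋₊ := Nat.half_le_floor ((one_le_div (Real.exp_pos q)).2 hqN)
  have hexp : (Real.exp q) ^ (1 / q) = Real.exp 1 := by
    rw [← Real.exp_mul, mul_one_div_cancel hq0.ne']
  have htwo : (2 : ℝ) ^ (1 / q) ≤ 2 := by
    simpa using Real.rpow_le_rpow_of_exponent_le one_le_two ((div_le_one hq0).2 hq)
  calc (2 * Real.exp 1)⁻¹ ≤ ((2 : ℝ) ^ (1 / q) * Real.exp 1)⁻¹ := by gcongr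
    _ = ((2 * Real.exp q)⁻¹) ^ (1 / q) := by
        rw [Real.inv_rpow (by positivity), Real.mul_rpow (by norm_num) (by positivity), hexp]
    _ ≤ (⌊N / Real.exp q⌋₊ / N) ^ (1 / q) := by gcongr

theorem stmt17_general {n N m : ℕ} (q : ℝ) (hq : 1 ≤ q) (hqN : Real.exp q ≤ N)
    (hm : m = ⌊(N : ℝ) / Real.exp q⌋₊) (σ : Fin m → Finset (Fin N))
    (hdisj : ∀ j j', j ≠ j' → Disjoint (σ j) (σ j'))
    {Ω : Type} [MeasurableSpace Ω] (P : Measure Ω)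
    (X : Fin N → Ω → (Fin n → ℝ)) (θ : Fin n → ℝ)
    (hint1 : Integrable (fun ω => ((N : ℝ)⁻¹ * ∑ i, |ip (X i ω) θ| ^ q) ^ (1/q)) P)
    (hint2 : ∀ j, Integrable (fun ω => ⨆ i ∈ σ j, |ip (X i ω) θ|) P) :
    ((m : ℝ) / N) ^ (1/q) *
        (⨅ j : Fin m, ∫ ω, (⨆ i ∈ σ j, |ip (X i ω) θ|) ∂P) ≤
      (∫ ω, ((N : ℝ)⁻¹ * ∑ i, |ip (X i ω) θ| ^ q) ^ (1/q) ∂P) ∧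
      (2 * Real.exp 1)⁻¹ ≤ ((m : ℝ) / N) ^ (1/q) := by
  have hm1 : 1 ≤ m := hm ▸ Nat.one_le_floor_iff _ |>.2 <| (one_le_div (Real.exp_pos q)).2 hqN
  have : Nonempty (Fin m) := ⟨⟨0, hm1⟩⟩
  refine ⟨?_, hm ▸ inv_two_mul_exp_one_le_rpow_floor_div hq hqN⟩
  have hblock (ω : Ω) := Real.mul_mean_biSup_le_rpow_mean (fun j j' => hdisj j j')
    (fun i => abs_nonneg (ip (X i ω) θ)) hq (Nat.cast_nonneg N)
  simp only [Fintype.card_fin] at hblock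
  calc ((m : ℝ) / N) ^ (1/q) * ⨅ j, ∫ ω, (⨆ i ∈ σ j, |ip (X i ω) θ|) ∂P
      ≤ ((m : ℝ) / N) ^ (1/q) * ((m : ℝ)⁻¹ * ∑ j, ∫ ω, (⨆ i ∈ σ j, |ip (X i ω) θ|) ∂P) := by
        gcongr
        simpa using Real.ciInf_le_mean fun j => ∫ ω, (⨆ i ∈ σ j, |ip (X i ω) θ|) ∂P
    _ = ∫ ω, ((m : ℝ) / N) ^ (1/q) * ((m : ℝ)⁻¹ * ∑ j, ⨆ i ∈ σ j, |ip (X i ω) θ|) ∂P := by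
        rw [integral_const_mul, integral_const_mul, integral_finsetSum _ fun j _ => hint2 j]
    _ ≤ ∫ ω, ((N : ℝ)⁻¹ * ∑ i, |ip (X i ω) θ| ^ q) ^ (1/q) ∂P :=
        integral_mono (((integrable_finsetSum _ fun j _ => hint2 j).const_mul _).const_mul _)
          hint1 hblock

/-- block lower bound. For i.i.d. X₁,…,X_N, a unit vector θ,
q ≥ 1 with e^q ≤ N, m = ⌊N/e^q⌋ and a partition σ₁,…,σ_m of {1,…,N} into
blocks of size ≥ e^q,
`E[(N⁻¹ ∑ᵢ |⟨X_i,θ⟩|^q)^{1/q}] ≥ (m/N)^{1/q} · min_j E[max_{i∈σⱼ} |⟨X_i,θ⟩|]`,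
and the prefactor satisfies `(m/N)^{1/q} ≥ 1/(2e)`. -/
theorem stmt17 {n N m : ℕ} (q : ℝ) (hq : 1 ≤ q) (hqN : Real.exp q ≤ N)
    (hm : m = ⌊(N : ℝ) / Real.exp q⌋₊) (hm1 : 1 ≤ m)
    (σ : Fin m → Finset (Fin N))
    (hdisj : ∀ j j', j ≠ j' → Disjoint (σ j) (σ j'))
    (hcover : Finset.univ.biUnion σ = Finset.univ)
    (hcard : ∀ j, Real.exp q ≤ ((σ j).card : ℝ))
    {Ω : Type} [MeasurableSpace Ω] (P : Measure Ω) [IsProbabilityMeasure P]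
    (X : Fin N → Ω → (Fin n → ℝ)) (hmeas : ∀ i, Measurable (X i))
    (hindep : iIndepFun X P)
    (hident : ∀ i j, Measure.map (X i) P = Measure.map (X j) P)
    (θ : Fin n → ℝ) (hθ : ∑ j, θ j ^ 2 = 1)
    (hint1 : Integrable (fun ω => ((N : ℝ)⁻¹ * ∑ i, |ip (X i ω) θ| ^ q) ^ (1/q)) P)
    (hint2 : ∀ j, Integrable (fun ω => ⨆ i ∈ σ j, |ip (X i ω) θ|) P) :
    ((m : ℝ) / N) ^ (1/q) *
        (⨅ j : Fin m, ∫ ω, (⨆ i ∈ σ j, |ip (X i ω) θ|) ∂P) ≤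
      (∫ ω, ((N : ℝ)⁻¹ * ∑ i, |ip (X i ω) θ| ^ q) ^ (1/q) ∂P) ∧
      (2 * Real.exp 1)⁻¹ ≤ ((m : ℝ) / N) ^ (1/q) :=
  stmt17_general q hq hqN hm σ hdisj P X θ hint1 hint2
end
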